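/- arXiv:1912.11182 — 2 statements merged into one kernel-verified Lean document; each statement's English description precedes it below -/
import Mathlib

section
/- For any positive time steps τ_1, …, τ_N, the DOC kernels satisfy Σ_{j=1}^n θ^{(n)}_{n−j} = τ_n for every 1 ≤ n ≤ N, and consequently Σ_{k=1}^n Σ_{j=1}^k θ^{(k)}_{k−j} = t_n for every 1 ≤ n ≤ N. -/
/- Read the kernels as lower-triangular matrices `B_{jk} = b^{(j)}_{j-k}` and
`Θ_{nj} = θ^{(n)}_{n-j}`. The DOC recursion says exactly that `Θ B = I`, while the
BDF2 kernels are exact on linear functions: `∑_k b^{(j)}_{j-k} τ_k = 1`, i.e. `B τ = 𝟙`.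
Hence `Θ 𝟙 = Θ B τ = τ`, which is the first claim; summing it over `n` gives the second. -/

open Finset

/-- BDF2 convolution kernels `b^{(n)}_j` built from the step sizes `τ`. -/
noncomputable def bdf2 (τ : ℕ → ℝ) (n j : ℕ) : ℝ :=
  if n = 1 then (if j = 0 then 1 / τ 1 else 0)
  else if j = 0 then (1 + 2 * (τ n / τ (n - 1))) / (τ n * (1 + τ n / τ (n - 1)))
  else if j = 1 then -(τ n / τ (n - 1)) ^ 2 / (τ n * (1 + τ n / τ (n - 1)))
  else 0

/-- DOC kernels: `doc τ n g = θ^{(n)}_g`, defined by the recursive procedure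
`θ^{(n)}_0 = 1/b^{(n)}_0`, `θ^{(n)}_{n-k} = -(1/b^{(k)}_0) ∑_{j=k+1}^n θ^{(n)}_{n-j} b^{(j)}_{j-k}`. -/
noncomputable def doc (τ : ℕ → ℝ) (n : ℕ) : ℕ → ℝ
  | 0 => 1 / bdf2 τ n 0
  | (g + 1) =>
    -(1 / bdf2 τ (n - (g + 1)) 0) *
      ∑ i ∈ (Finset.range (g + 1)).attach,
        doc τ n i.1 * bdf2 τ (n - i.1) (g + 1 - i.1)
  decreasing_by exact Finset.mem_range.mp i.2

/-- The variable-step BDF2 formula `D_2 v^n = ∑_{k=1}^n b^{(n)}_{n-k} (v^k - v^{k-1})`. -/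
noncomputable def D2 {V : Type*} [AddCommGroup V] [Module ℝ V]
    (τ : ℕ → ℝ) (v : ℕ → V) (n : ℕ) : V :=
  ∑ k ∈ Finset.Icc 1 n, bdf2 τ n (n - k) • (v k - v (k - 1))

/-- Time levels `t_n = τ_1 + ⋯ + τ_n`. -/
noncomputable def tlv (τ : ℕ → ℝ) (n : ℕ) : ℝ := ∑ i ∈ Finset.Icc 1 n, τ i

lemma doc_succ (τ : ℕ → ℝ) (n g : ℕ) :
    doc τ n (g + 1) = -(1 / bdf2 τ (n - (g + 1)) 0) *
      ∑ i ∈ range (g + 1), doc τ n i * bdf2 τ (n - i) (g + 1 - i) := by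
  rw [doc, ← sum_attach (range (g + 1))]

section

variable {τ : ℕ → ℝ}

lemma bdf2_eq_zero_of_two_le {n j : ℕ} (hj : 2 ≤ j) : bdf2 τ n j = 0 := by
  simp [bdf2, show j ≠ 0 by omega, show j ≠ 1 by omega]

lemma bdf2_zero_pos {k : ℕ} (hτ : ∀ i, 1 ≤ i → i ≤ k → 0 < τ i) (hk : 1 ≤ k) :
    0 < bdf2 τ k 0 := by
  rcases eq_or_ne k 1 with rfl | hk1
  · simpa [bdf2] using hτ 1 le_rfl le_rfl
  · have hprev := hτ (k - 1) (by omega) (by omega)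
    have hcur := hτ k hk le_rfl
    simp only [bdf2, if_neg hk1, if_true]
    positivity

lemma sum_bdf2_mul_step {j : ℕ} (hτ : ∀ i, 1 ≤ i → i ≤ j → 0 < τ i) (hj : 1 ≤ j) :
    ∑ k ∈ Icc 1 j, bdf2 τ j (j - k) * τ k = 1 := by
  rcases eq_or_ne j 1 with rfl | hj1
  · have := (hτ 1 le_rfl le_rfl).ne'
    simp [bdf2, this]
  · obtain ⟨m, rfl⟩ : ∃ m, j = m + 2 := ⟨j - 2, by omega⟩
    have hfar : ∑ k ∈ Icc 1 m, bdf2 τ (m + 2) (m + 2 - k) * τ k = 0 :=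
      sum_eq_zero fun k hk => by
        rw [mem_Icc] at hk
        rw [bdf2_eq_zero_of_two_le (by omega), zero_mul]
    have hprev := hτ (m + 1) (by omega) (by omega)
    have hcur := hτ (m + 2) (by omega) le_rfl
    rw [sum_Icc_succ_top (by omega), sum_Icc_succ_top (by omega), hfar, zero_add,
      show m + 2 - (m + 1) = 1 by omega, Nat.sub_self]
    simp only [bdf2, show m + 2 ≠ 1 by omega, show m + 2 - 1 = m + 1 by omega, if_false,
      if_true, one_ne_zero]
    field_simp
    ring

lemma sum_range_doc_mul_bdf2_eq_ite {n g : ℕ} (hb : bdf2 τ (n - g) 0 ≠ 0) :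
    ∑ i ∈ range (g + 1), doc τ n i * bdf2 τ (n - i) (g - i) = if g = 0 then 1 else 0 := by
  cases g with
  | zero =>
    rw [Nat.sub_zero] at hb
    simp [doc, hb]
  | succ g =>
    rw [sum_range_succ, Nat.sub_self, doc_succ, if_neg (Nat.succ_ne_zero g)]
    field_simp
    ring

lemma sum_doc_mul_bdf2_eq_ite {n k : ℕ} (hb : bdf2 τ k 0 ≠ 0) (hkn : k ≤ n) :
    ∑ j ∈ Icc k n, doc τ n (n - j) * bdf2 τ j (j - k) = if n = k then 1 else 0 := by
  set f : ℕ → ℝ := fun i => doc τ n i * bdf2 τ (n - i) (n - k - i)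
  calc ∑ j ∈ Icc k n, doc τ n (n - j) * bdf2 τ j (j - k)
      = ∑ j ∈ Icc k n, f (n - j) := sum_congr rfl fun j hj => by
        rw [mem_Icc] at hj
        simp only [f, Nat.sub_sub_self hj.2, show n - k - (n - j) = j - k by omega]
    _ = ∑ i ∈ range (n - k + 1), f i := by
        rw [← Ico_add_one_right_eq_Icc, sum_Ico_reflect f k le_rfl, Nat.sub_self,
          Nat.Ico_zero_eq_range, show n + 1 - k = n - k + 1 by omega]
    _ = if n - k = 0 then 1 else 0 :=
        sum_range_doc_mul_bdf2_eq_ite (by rwa [Nat.sub_sub_self hkn])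
    _ = if n = k then 1 else 0 := by simp only [Nat.sub_eq_zero_iff_le, hkn.ge_iff_eq']

lemma sum_doc_eq_step {n : ℕ} (hτ : ∀ k, 1 ≤ k → k ≤ n → 0 < τ k) (hn : 1 ≤ n) :
    ∑ j ∈ Icc 1 n, doc τ n (n - j) = τ n := by
  have hτ' : ∀ {j}, j ≤ n → ∀ i, 1 ≤ i → i ≤ j → 0 < τ i :=
    fun hjn i hi hij => hτ i hi (hij.trans hjn)
  calc ∑ j ∈ Icc 1 n, doc τ n (n - j)
      = ∑ j ∈ Icc 1 n, ∑ k ∈ Icc 1 j, doc τ n (n - j) * bdf2 τ j (j - k) * τ k := by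
        refine sum_congr rfl fun j hj => ?_
        rw [mem_Icc] at hj
        simp only [mul_assoc, ← mul_sum, sum_bdf2_mul_step (hτ' hj.2) hj.1, mul_one]
    _ = ∑ k ∈ Icc 1 n, ∑ j ∈ Icc k n, doc τ n (n - j) * bdf2 τ j (j - k) * τ k := by
        simpa only [Ico_add_one_right_eq_Icc] using
          (sum_Ico_Ico_comm 1 (n + 1) fun k j => doc τ n (n - j) * bdf2 τ j (j - k) * τ k).symm
    _ = ∑ k ∈ Icc 1 n, if n = k then τ k else 0 := by
        refine sum_congr rfl fun k hk => ?_
        rw [mem_Icc] at hk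
        rw [← sum_mul, sum_doc_mul_bdf2_eq_ite (bdf2_zero_pos (hτ' hk.2) hk.1).ne' hk.2,
          ite_mul, one_mul, zero_mul]
    _ = τ n := by simp [hn]

end

/-- `∑_{j=1}^n θ^{(n)}_{n-j} = τ_n` and `∑_{k=1}^n ∑_{j=1}^k θ^{(k)}_{k-j} = t_n`. -/
theorem doc_row_sums
    (N : ℕ) (τ : ℕ → ℝ) (hτ : ∀ k, 1 ≤ k → k ≤ N → 0 < τ k) :
    (∀ n, 1 ≤ n → n ≤ N → ∑ j ∈ Finset.Icc 1 n, doc τ n (n - j) = τ n) ∧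
    (∀ n, 1 ≤ n → n ≤ N →
      ∑ k ∈ Finset.Icc 1 n, ∑ j ∈ Finset.Icc 1 k, doc τ k (k - j) = tlv τ n) := by
  have row (n : ℕ) (hn : 1 ≤ n) (hnN : n ≤ N) : ∑ j ∈ Icc 1 n, doc τ n (n - j) = τ n :=
    sum_doc_eq_step (fun k hk hkn => hτ k hk (hkn.trans hnN)) hn
  refine ⟨row, fun n _ hnN => sum_congr rfl fun k hk => ?_⟩
  rw [mem_Icc] at hk
  exact row k hk.1 (hk.2.trans hnN)
end

section
/- Let H be a real inner product space and L : H → H a linear map that is symmetric (⟨Lw, v⟩ = ⟨w, Lv⟩ for all w, v) and nonpositive (⟨Lw, w⟩ ≤ 0 for all w), and suppose there is a constant C₀ > 0 such that ‖w‖ ≤ C₀·√⟨−Lw, w⟩ for all w ∈ H. Let τ_1, …, τ_{N+1} > 0 be time steps whose ratios satisfy 0 < r_k ≤ (3+√17)/2 for 2 ≤ k ≤ N+1, and let u^0, …, u^N and f^1, …, f^N in H satisfy D_2 u^n = L u^n + f^n for 1 ≤ n ≤ N. With the discrete energy E^0 := ⟨−L u^0, u^0⟩ and E^k := (r_{k+1}/(1+r_{k+1}))·τ_k·‖(u^k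 − u^{k−1})/τ_k‖² + ⟨−L u^k, u^k⟩, the solution is unconditionally stable in the energy norm: √(E^n) ≤ √(E^0) + 4·C₀·(‖f^1‖ + Σ_{k=2}^n ‖f^k − f^{k−1}‖) for every 1 ≤ n ≤ N. -/
open Finset

lemma D2_one {V : Type*} [AddCommGroup V] [Module ℝ V] (τ : ℕ → ℝ) (v : ℕ → V) :
    D2 τ v 1 = (1 / τ 1) • (v 1 - v 0) := by
  unfold D2; simp [bdf2]

lemma D2_two {V : Type*} [AddCommGroup V] [Module ℝ V] (τ : ℕ → ℝ) (v : ℕ → V)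
    (n : ℕ) (hn : 2 ≤ n) :
    D2 τ v n = bdf2 τ n 0 • (v n - v (n - 1)) + bdf2 τ n 1 • (v (n - 1) - v (n - 1 - 1)) := by
  have hsub : ({n - 1, n} : Finset ℕ) ⊆ Finset.Icc 1 n := by
    intro x hx; simp only [Finset.mem_insert, Finset.mem_singleton] at hx
    rcases hx with rfl | rfl <;> simp [Finset.mem_Icc] <;> omega
  have hvanish : ∀ x ∈ Finset.Icc 1 n, x ∉ ({n - 1, n} : Finset ℕ) →
      bdf2 τ n (n - x) • (v x - v (x - 1)) = 0 := by
    intro x hx hxs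
    simp only [Finset.mem_Icc] at hx
    simp only [Finset.mem_insert, Finset.mem_singleton, not_or] at hxs
    have h1 : n - x ≠ 0 := by omega
    have h2 : n - x ≠ 1 := by omega
    have h3 : n ≠ 1 := by omega
    simp [bdf2, h1, h2, h3]
  rw [D2, ← Finset.sum_subset hsub hvanish, Finset.sum_pair (by omega : n - 1 ≠ n)]
  have h1 : n - (n - 1) = 1 := by omega
  have h2 : n - n = 0 := by omega
  rw [h1, h2, add_comm]

lemma key_ineq (r r' : ℝ) (hr : 0 < r) (hr' : 0 < r')
    (hrR : r ≤ (3 + Real.sqrt 17) / 2) (hr'R : r' ≤ (3 + Real.sqrt 17) / 2) :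
    r' / (1 + r') ≤ (2 * (1 + 2 * r) - r ^ 2) / (1 + r) := by
  set R := (3 + Real.sqrt 17) / 2 with hRdef
  have h17 : Real.sqrt 17 ^ 2 = 17 := Real.sq_sqrt (by norm_num)
  have h4 : (4 : ℝ) ≤ Real.sqrt 17 := by
    nlinarith [Real.sqrt_nonneg 17, h17]
  have hR2 : R ^ 2 = 3 * R + 2 := by rw [hRdef]; nlinarith [h17]
  have hRpos : (0:ℝ) < R := by rw [hRdef]; nlinarith
  have hR2' : (2:ℝ) ≤ R := by rw [hRdef]; nlinarith
  have h1r : (0:ℝ) < 1 + r := by linarith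
  have h1r' : (0:ℝ) < 1 + r' := by linarith
  have h1R : (0:ℝ) < 1 + R := by linarith
  have step1 : r' / (1 + r') ≤ R / (1 + R) := by
    rw [div_le_div_iff₀ h1r' h1R]; nlinarith
  refine le_trans step1 ?_
  rw [div_le_div_iff₀ h1R h1r]
  nlinarith [mul_nonneg (sub_nonneg.mpr hrR) (by nlinarith : (0:ℝ) ≤ (1 + R) * r + (R - 2))]


set_option maxHeartbeats 1000000 in
/-- unconditional stability in the energy norm. -/
theorem bdf2_energy_stability
    {H : Type*} [NormedAddCommGroup H] [InnerProductSpace ℝ H]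
    (L : H →ₗ[ℝ] H)
    (hsym : ∀ w v : H, (inner ℝ (L w) v : ℝ) = inner ℝ w (L v))
    (hneg : ∀ w : H, (inner ℝ (L w) w : ℝ) ≤ 0)
    (C₀ : ℝ) (hC₀ : 0 < C₀)
    (hPoincare : ∀ w : H, ‖w‖ ≤ C₀ * Real.sqrt (inner ℝ (-L w) w : ℝ))
    (N : ℕ) (τ : ℕ → ℝ)
    (hτ : ∀ k, 1 ≤ k → k ≤ N + 1 → 0 < τ k)
    (hS1 : ∀ k, 2 ≤ k → k ≤ N + 1 →
      0 < τ k / τ (k - 1) ∧ τ k / τ (k - 1) ≤ (3 + Real.sqrt 17) / 2)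
    (u f : ℕ → H)
    (hscheme : ∀ n, 1 ≤ n → n ≤ N → D2 τ u n = L (u n) + f n)
    (E : ℕ → ℝ)
    (hE0 : E 0 = (inner ℝ (-L (u 0)) (u 0) : ℝ))
    (hE : ∀ k, 1 ≤ k → k ≤ N →
      E k = (τ (k + 1) / τ k) / (1 + τ (k + 1) / τ k) * τ k *
              ‖(τ k)⁻¹ • (u k - u (k - 1))‖ ^ 2
            + (inner ℝ (-L (u k)) (u k) : ℝ)) :
    ∀ n, 1 ≤ n → n ≤ N →
      Real.sqrt (E n) ≤ Real.sqrt (E 0) +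
        4 * C₀ * (‖f 1‖ + ∑ k ∈ Finset.Icc 2 n, ‖f k - f (k - 1)‖) := by
  -- basic abbreviations
  set δ : ℕ → H := fun k => u k - u (k - 1) with hδ
  set Q : ℕ → ℝ := fun k => (inner ℝ (-L (u k)) (u k) : ℝ) with hQ
  set σ : ℕ → ℝ := fun k => (τ (k + 1) / τ k) / (1 + τ (k + 1) / τ k) with hσ
  have hQneg : ∀ k, Q k = -(inner ℝ (L (u k)) (u k) : ℝ) := by
    intro k; simp [hQ, inner_neg_left]
  have hQnonneg : ∀ k, 0 ≤ Q k := by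
    intro k; rw [hQneg]; linarith [hneg (u k)]
  have lid : ∀ x y : H, 2 * (inner ℝ (L x) (x - y) : ℝ) =
      (inner ℝ (L x) x : ℝ) - (inner ℝ (L y) y : ℝ) + (inner ℝ (L (x - y)) (x - y) : ℝ) := by
    intro x y
    have h1 : (inner ℝ (L y) x : ℝ) = (inner ℝ (L x) y : ℝ) := by
      rw [hsym y x, real_inner_comm]
    simp only [map_sub, inner_sub_left, inner_sub_right]
    linarith
  -- rewritten energy
  have hEexp : ∀ k, 1 ≤ k → k ≤ N → E k = σ k / τ k * ‖δ k‖ ^ 2 + Q k := by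
    intro k hk1 hkN
    rw [hE k hk1 hkN]
    have hτk : 0 < τ k := hτ k hk1 (by omega)
    have : ‖(τ k)⁻¹ • (u k - u (k - 1))‖ = (τ k)⁻¹ * ‖δ k‖ := by
      rw [norm_smul, Real.norm_eq_abs, abs_inv, abs_of_pos hτk, hδ]
    have hr := (hS1 (k + 1) (by omega) (by omega)).1
    rw [show k + 1 - 1 = k from by omega] at hr
    have h1r : (0:ℝ) < 1 + τ (k + 1) / τ k := by linarith
    rw [this]
    have hQk : (inner ℝ (-L (u k)) (u k) : ℝ) = Q k := rfl
    rw [hQk]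
    simp only [hσ]
    generalize τ (k + 1) / τ k / (1 + τ (k + 1) / τ k) = S
    field_simp
  -- σ is positive and less than 1 in range
  have hσpos : ∀ k, 1 ≤ k → k ≤ N → 0 < σ k ∧ σ k ≤ 1 := by
    intro k hk1 hkN
    have hr := hS1 (k + 1) (by omega) (by omega)
    rw [show k + 1 - 1 = k from by omega] at hr
    constructor
    · rw [hσ]; exact div_pos hr.1 (by linarith [hr.1])
    · rw [hσ]; rw [div_le_one (by linarith [hr.1])]; linarith [hr.1]
  -- the per-step energy inequality
  have hstep : ∀ n, 1 ≤ n → n ≤ N →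
      E n ≤ E (n - 1) + 2 * (inner ℝ (f n) (δ n) : ℝ) := by
    intro n hn1 hnN
    have hτn : 0 < τ n := hτ n hn1 (by omega)
    have hEn := hEexp n hn1 hnN
    have hσn := hσpos n hn1 hnN
    have hLbound : 2 * (inner ℝ (L (u n)) (δ n) : ℝ) ≤ Q (n - 1) - Q n := by
      have := lid (u n) (u (n - 1))
      have h2 := hneg (δ n)
      have hq1 : Q n = -(inner ℝ (L (u n)) (u n) : ℝ) := hQneg n
      have hq2 : Q (n - 1) = -(inner ℝ (L (u (n - 1))) (u (n - 1)) : ℝ) := hQneg (n - 1)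
      have hδn : δ n = u n - u (n - 1) := rfl
      rw [← hδn] at this
      have h2' : (inner ℝ (L (δ n)) (δ n) : ℝ) ≤ 0 := h2
      linarith
    rcases Nat.lt_or_ge n 2 with hn2 | hn2
    · -- n = 1
      have hn : n = 1 := by omega
      subst hn
      have hD : (1 / τ 1) • δ 1 = L (u 1) + f 1 := by
        rw [← D2_one τ u]; exact hscheme 1 le_rfl hnN
      have c1 : (1 / τ 1) * ‖δ 1‖ ^ 2 = (inner ℝ (L (u 1)) (δ 1) : ℝ) + (inner ℝ (f 1) (δ 1) : ℝ) := by
        have := congrArg (fun x : H => (inner ℝ x (δ 1) : ℝ)) hD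
        simpa [inner_add_left, real_inner_smul_left, real_inner_self_eq_norm_sq] using this
      have hE0' : E 0 = Q 0 := hE0
      rw [hEn, hE0']
      have hn1' : ‖δ 1‖ ^ 2 / τ 1 * σ 1 ≤ ‖δ 1‖ ^ 2 / τ 1 * 2 := by
        apply mul_le_mul_of_nonneg_left (by linarith [hσn.2]) (by positivity)
      have ha : σ 1 / τ 1 * ‖δ 1‖ ^ 2 = ‖δ 1‖ ^ 2 / τ 1 * σ 1 := by ring
      have hb : 2 * ((1 / τ 1) * ‖δ 1‖ ^ 2) = ‖δ 1‖ ^ 2 / τ 1 * 2 := by ring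
      linarith
    · -- n ≥ 2
      have hτn1 : 0 < τ (n - 1) := hτ (n - 1) (by omega) (by omega)
      have hτn1' : 0 < τ (n + 1) := hτ (n + 1) (by omega) (by omega)
      have hrn := hS1 n hn2 (by omega)
      have hrn1 := hS1 (n + 1) (by omega) (by omega)
      rw [show n + 1 - 1 = n from by omega] at hrn1
      set r : ℝ := τ n / τ (n - 1) with hrdef
      set r' : ℝ := τ (n + 1) / τ n with hr'def
      clear_value r r'
      have hkey := key_ineq r r' hrn.1 hrn1.1 hrn.2 hrn1.2
      have h1r : (0:ℝ) < 1 + r := by linarith [hrn.1]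
      have h1r' : (0:ℝ) < 1 + r' := by linarith [hrn1.1]
      -- kernels
      have hb0 : bdf2 τ n 0 = (1 + 2 * r) / (τ n * (1 + r)) := by
        rw [hrdef, bdf2]; simp [show n ≠ 1 from by omega]
      have hb1 : bdf2 τ n 1 = -(r ^ 2 / (τ n * (1 + r))) := by
        rw [hrdef, bdf2]; simp [show n ≠ 1 from by omega]; ring
      set b0 : ℝ := (1 + 2 * r) / (τ n * (1 + r)) with hb0d
      set rr : ℝ := r ^ 2 / (τ n * (1 + r)) with hrrd
      clear_value b0 rr
      have hrrpos : 0 < rr := by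
        rw [hrrd]; exact div_pos (pow_pos hrn.1 2) (mul_pos hτn h1r)
      -- scheme and tested identity
      have hD : b0 • δ n + (-rr) • δ (n - 1) = L (u n) + f n := by
        rw [← hb0, ← hb1, ← D2_two τ u n hn2]
        exact hscheme n hn1 hnN
      set a : ℝ := ‖δ n‖ with had
      set bb : ℝ := ‖δ (n - 1)‖ with hbd
      set P : ℝ := (inner ℝ (δ (n - 1)) (δ n) : ℝ) with hPd
      have c1 : b0 * a ^ 2 + (-rr) * P = (inner ℝ (L (u n)) (δ n) : ℝ) + (inner ℝ (f n) (δ n) : ℝ) := by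
        have := congrArg (fun x : H => (inner ℝ x (δ n) : ℝ)) hD
        simpa [inner_add_left, real_inner_smul_left, real_inner_self_eq_norm_sq, had, hPd]
          using this
      have cP : P ≤ bb * a := by
        rw [hPd, had, hbd]; exact real_inner_le_norm _ _
      have c3 : -(rr * (a ^ 2 + bb ^ 2)) ≤ 2 * ((-rr) * P) := by
        nlinarith [mul_le_mul_of_nonneg_left cP hrrpos.le, mul_nonneg hrrpos.le (sq_nonneg (a - bb))]
      -- coefficient inequalities
      have cA : σ n / τ n ≤ 2 * b0 - rr := by
        have h1 : σ n = r' / (1 + r') := by simp only [hσ]; rw [hr'def]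
        have h2 : 2 * b0 - rr = (2 * (1 + 2 * r) - r ^ 2) / (τ n * (1 + r)) := by
          rw [hb0d, hrrd, ← mul_div_assoc, div_sub_div_same]
        have h3 : (0:ℝ) < τ n * (1 + r) := mul_pos hτn h1r
        have h4 : r' / (1 + r') * (1 + r) ≤ 2 * (1 + 2 * r) - r ^ 2 := by
          have h5 := mul_le_mul_of_nonneg_right hkey h1r.le
          rwa [div_mul_cancel₀ _ h1r.ne'] at h5
        rw [h1, h2, div_le_div_iff₀ hτn h3]
        nlinarith [mul_le_mul_of_nonneg_right h4 hτn.le]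
      have hmul : r * τ (n - 1) = τ n := by
        rw [hrdef]; field_simp
      have cB : rr = σ (n - 1) / τ (n - 1) := by
        have hσn1 : σ (n - 1) = r / (1 + r) := by
          simp only [hσ]; rw [show n - 1 + 1 = n from by omega, hrdef]
        rw [hσn1, hrrd, div_div, div_eq_div_iff (mul_pos hτn h1r).ne'
          (mul_pos h1r hτn1).ne']
        linear_combination (r * (1 + r)) * hmul
      -- energies
      have hEn1 := hEexp (n - 1) (by omega) (by omega)
      rw [hEn, hEn1, ← hbd]
      rw [← cB]
      have ha2 : σ n / τ n * a ^ 2 ≤ (2 * b0 - rr) * a ^ 2 :=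
        mul_le_mul_of_nonneg_right cA (sq_nonneg a)
      linarith
  -- cumulative energy inequality
  have hsum : ∀ m, 1 ≤ m → m ≤ N →
      E m ≤ E 0 + 2 * ∑ k ∈ Finset.Icc 1 m, (inner ℝ (f k) (δ k) : ℝ) := by
    intro m
    induction m with
    | zero => omega
    | succ m ih =>
      intro _ hmN
      rcases Nat.eq_zero_or_pos m with rfl | hm
      · simpa using hstep 1 le_rfl hmN
      · have h1 := hstep (m + 1) (by omega) hmN
        rw [show m + 1 - 1 = m from by omega] at h1
        have h2 := ih hm (by omega)
        rw [Finset.sum_Icc_succ_top (by omega : 1 ≤ m + 1)]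
        linarith
  -- Abel summation
  have habel : ∀ m, 1 ≤ m →
      ∑ k ∈ Finset.Icc 1 m, (inner ℝ (f k) (δ k) : ℝ) =
        (inner ℝ (f m) (u m) : ℝ) - (inner ℝ (f 1) (u 0) : ℝ) -
          ∑ k ∈ Finset.Icc 2 m, (inner ℝ (f k - f (k - 1)) (u (k - 1)) : ℝ) := by
    intro m
    induction m with
    | zero => omega
    | succ m ih =>
      intro _
      rcases Nat.eq_zero_or_pos m with rfl | hm
      · simp [hδ, inner_sub_right]
      · rw [Finset.sum_Icc_succ_top (by omega : 1 ≤ m + 1),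
            Finset.sum_Icc_succ_top (by omega : 2 ≤ m + 1), ih hm]
        simp only [hδ, Nat.add_sub_cancel, inner_sub_right, inner_sub_left]
        ring
  -- triangle bound on ‖f m‖
  have hFf : ∀ m, 1 ≤ m → ‖f m‖ ≤ ‖f 1‖ + ∑ k ∈ Finset.Icc 2 m, ‖f k - f (k - 1)‖ := by
    intro m
    induction m with
    | zero => omega
    | succ m ih =>
      intro _
      rcases Nat.eq_zero_or_pos m with rfl | hm
      · simp
      · rw [Finset.sum_Icc_succ_top (by omega : 2 ≤ m + 1)]
        have h1 : ‖f (m + 1)‖ ≤ ‖f m‖ + ‖f (m + 1) - f (m + 1 - 1)‖ := by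
          rw [show m + 1 - 1 = m from rfl]
          calc ‖f (m + 1)‖ = ‖f m + (f (m + 1) - f m)‖ := by congr 1; abel
            _ ≤ ‖f m‖ + ‖f (m + 1) - f m‖ := norm_add_le _ _
        linarith [ih hm]
  have hFnn : ∀ m : ℕ, 0 ≤ ‖f 1‖ + ∑ k ∈ Finset.Icc 2 m, ‖f k - f (k - 1)‖ := by
    intro m
    exact add_nonneg (norm_nonneg _) (Finset.sum_nonneg fun _ _ => norm_nonneg _)
  have hFmono : ∀ m m' : ℕ, m ≤ m' →
      ‖f 1‖ + ∑ k ∈ Finset.Icc 2 m, ‖f k - f (k - 1)‖ ≤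
      ‖f 1‖ + ∑ k ∈ Finset.Icc 2 m', ‖f k - f (k - 1)‖ := by
    intro m m' hmm
    refine add_le_add_right (Finset.sum_le_sum_of_subset_of_nonneg
      (Finset.Icc_subset_Icc_right hmm) fun _ _ _ => norm_nonneg _) _
  -- E is nonnegative
  have hEnn : ∀ k, k ≤ N → 0 ≤ E k := by
    intro k hk
    rcases Nat.eq_zero_or_pos k with rfl | hk1
    · rw [hE0]; exact hQnonneg 0
    · rw [hEexp k hk1 hk]
      have h1 := hσpos k hk1 hk
      have h2 : 0 ≤ σ k / τ k * ‖δ k‖ ^ 2 :=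
        mul_nonneg (div_nonneg h1.1.le (hτ k hk1 (by omega)).le) (sq_nonneg _)
      linarith [hQnonneg k]
  -- Poincaré-type bound by the energy
  have hub : ∀ k, k ≤ N → ‖u k‖ ≤ C₀ * Real.sqrt (E k) := by
    intro k hk
    refine le_trans (hPoincare (u k)) (mul_le_mul_of_nonneg_left ?_ hC₀.le)
    apply Real.sqrt_le_sqrt
    rcases Nat.eq_zero_or_pos k with rfl | hk1
    · rw [hE0]
    · rw [hEexp k hk1 hk]
      have h1 := hσpos k hk1 hk
      have h2 : 0 ≤ σ k / τ k * ‖δ k‖ ^ 2 :=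
        mul_nonneg (div_nonneg h1.1.le (hτ k hk1 (by omega)).le) (sq_nonneg _)
      have h3 : (inner ℝ (-L (u k)) (u k) : ℝ) = Q k := rfl
      rw [h3]; linarith
  -- final argument via a maximal index
  intro n hn1 hnN
  obtain ⟨m, hmmem, hmax⟩ := Finset.exists_max_image (Finset.range (n + 1)) E
    ⟨0, Finset.mem_range.mpr (by omega)⟩
  have hmn : m ≤ n := by
    have := Finset.mem_range.mp hmmem; omega
  have hsn : Real.sqrt (E n) ≤ Real.sqrt (E m) :=
    Real.sqrt_le_sqrt (hmax n (Finset.mem_range.mpr (by omega)))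
  have hRHSnn : 0 ≤ 4 * C₀ * (‖f 1‖ + ∑ k ∈ Finset.Icc 2 n, ‖f k - f (k - 1)‖) :=
    mul_nonneg (by linarith) (hFnn n)
  rcases Nat.eq_zero_or_pos m with rfl | hm1
  · linarith [hsn]
  · have hmN : m ≤ N := le_trans hmn hnN
    set M : ℝ := Real.sqrt (E m) with hM
    have hMnn : 0 ≤ M := Real.sqrt_nonneg _
    have hM2 : M ^ 2 = E m := Real.sq_sqrt (hEnn m hmN)
    have hsqle : ∀ k, k ≤ n → Real.sqrt (E k) ≤ M := by
      intro k hkn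
      exact Real.sqrt_le_sqrt (hmax k (Finset.mem_range.mpr (by omega)))
    have hsE0 : Real.sqrt (E 0) ≤ M := hsqle 0 (by omega)
    have hubM : ∀ k, k ≤ m → ‖u k‖ ≤ C₀ * M := by
      intro k hkm
      refine le_trans (hub k (by omega)) (mul_le_mul_of_nonneg_left ?_ hC₀.le)
      exact hsqle k (by omega)
    set Fm : ℝ := ‖f 1‖ + ∑ k ∈ Finset.Icc 2 m, ‖f k - f (k - 1)‖ with hFm
    have key : E m ≤ E 0 + 2 * ((inner ℝ (f m) (u m) : ℝ) - (inner ℝ (f 1) (u 0) : ℝ) -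
        ∑ k ∈ Finset.Icc 2 m, (inner ℝ (f k - f (k - 1)) (u (k - 1)) : ℝ)) := by
      rw [← habel m hm1]; exact hsum m hm1 hmN
    have bA : (inner ℝ (f m) (u m) : ℝ) ≤ Fm * (C₀ * M) := by
      calc (inner ℝ (f m) (u m) : ℝ) ≤ ‖f m‖ * ‖u m‖ := real_inner_le_norm _ _
        _ ≤ Fm * (C₀ * M) := by
            apply mul_le_mul (hFf m hm1) (hubM m le_rfl) (norm_nonneg _) (hFnn m)
    have bB : -(inner ℝ (f 1) (u 0) : ℝ) ≤ ‖f 1‖ * (C₀ * M) := by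
      calc -(inner ℝ (f 1) (u 0) : ℝ) ≤ ‖f 1‖ * ‖u 0‖ := by
            have := abs_real_inner_le_norm (f 1) (u 0)
            have h2 := neg_abs_le (inner ℝ (f 1) (u 0) : ℝ)
            linarith
        _ ≤ ‖f 1‖ * (C₀ * M) :=
            mul_le_mul_of_nonneg_left (hubM 0 (by omega)) (norm_nonneg _)
    have bS : -(∑ k ∈ Finset.Icc 2 m, (inner ℝ (f k - f (k - 1)) (u (k - 1)) : ℝ)) ≤
        (∑ k ∈ Finset.Icc 2 m, ‖f k - f (k - 1)‖) * (C₀ * M) := by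
      rw [← Finset.sum_neg_distrib, Finset.sum_mul]
      apply Finset.sum_le_sum
      intro k hk
      simp only [Finset.mem_Icc] at hk
      calc -(inner ℝ (f k - f (k - 1)) (u (k - 1)) : ℝ) ≤ ‖f k - f (k - 1)‖ * ‖u (k - 1)‖ := by
            have := abs_real_inner_le_norm (f k - f (k - 1)) (u (k - 1))
            have h2 := neg_abs_le (inner ℝ (f k - f (k - 1)) (u (k - 1)) : ℝ)
            linarith
        _ ≤ ‖f k - f (k - 1)‖ * (C₀ * M) :=
            mul_le_mul_of_nonneg_left (hubM (k - 1) (by omega)) (norm_nonneg _)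
    have hE0M : E 0 ≤ Real.sqrt (E 0) * M := by
      have h0 : Real.sqrt (E 0) ^ 2 = E 0 := Real.sq_sqrt (hEnn 0 (by omega))
      nlinarith [Real.sqrt_nonneg (E 0), hsE0]
    have hEmM : M * M ≤ (Real.sqrt (E 0) + 4 * C₀ * Fm) * M := by
      have : E m ≤ Real.sqrt (E 0) * M + 4 * C₀ * Fm * M := by
        have expand : Fm * (C₀ * M) + ‖f 1‖ * (C₀ * M) +
            (∑ k ∈ Finset.Icc 2 m, ‖f k - f (k - 1)‖) * (C₀ * M) = 2 * C₀ * Fm * M := by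
          rw [hFm]; ring
        nlinarith [key, bA, bB, bS, hE0M]
      nlinarith [hM2]
    have hMle : M ≤ Real.sqrt (E 0) + 4 * C₀ * Fm := by
      rcases eq_or_lt_of_le hMnn with h0 | hMpos
      · rw [← h0]
        exact add_nonneg (Real.sqrt_nonneg _) (mul_nonneg (by linarith) (hFnn m))
      · exact le_of_mul_le_mul_right (by linarith [hEmM]) hMpos
    have hFmn : 4 * C₀ * Fm ≤
        4 * C₀ * (‖f 1‖ + ∑ k ∈ Finset.Icc 2 n, ‖f k - f (k - 1)‖) :=
      mul_le_mul_of_nonneg_left (hFmono m n hmn) (by linarith)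
    linarith [hsn, hMle, hFmn]
end
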